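/- For continuous linear automorphisms S, T of a Banach space B, the induced operators on ℓ^∞(ℤ, B) satisfy ‖T_∞ − S_∞‖ ≤ ‖T − S‖. Consequently, the shadowing property is open in the operator-norm topology on linear automorphisms. -/

import Mathlib

/-!
The difference `T_∞ - S_∞` acts coordinatewise as `S - T`, so its norm is at most `‖S - T‖`.
Shadowing of `T` is equivalent to surjectivity of `T_∞`: a pseudo-orbit with jumps `z n` is
shadowed by an orbit exactly when `z` has a bounded preimage, namely the difference of the two.
Surjective operators between Banach spaces form an open set: near a surjective `L`, the open
mapping theorem gives approximate preimages with a fixed norm bound, and iterating them converges.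
-/

open Function Filter Topology
open scoped lp ENNReal

/-- Shadowing property for a continuous linear automorphism. -/
def Shadowing {X : Type*} [SeminormedAddCommGroup X] [Module ℝ X] (T : X ≃L[ℝ] X) : Prop :=
  ∀ ε > (0 : ℝ), ∃ δ > (0 : ℝ), ∀ x : ℤ → X,
    (∀ n : ℤ, ‖x (n + 1) - T (x n)‖ < δ) →
    ∃ y : X, ∀ n : ℤ, ‖x n - (T ^ n) y‖ < ε

namespace ContinuousLinearMap

variable {𝕜 E F : Type*} [NontriviallyNormedField 𝕜] [NormedAddCommGroup E] [NormedSpace 𝕜 E]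
  [NormedAddCommGroup F] [NormedSpace 𝕜 F]

theorem surjective_of_forall_exists_norm_sub_le [CompleteSpace E] (f : E →L[𝕜] F) {C q : ℝ}
    (hq₀ : 0 ≤ q) (hq : q < 1) (h : ∀ y, ∃ x, ‖y - f x‖ ≤ q * ‖y‖ ∧ ‖x‖ ≤ C * ‖y‖) :
    Surjective f := by
  choose g hg using h
  intro y
  set r : ℕ → F := fun n => (fun z => z - f (g z))^[n] y
  have hr_succ : ∀ n, r (n + 1) = r n - f (g (r n)) := fun n => iterate_succ_apply' _ n y
  have hr : ∀ n, ‖r n‖ ≤ q ^ n * ‖y‖ := by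
    intro n
    induction n with
    | zero => simp [r]
    | succ n ih =>
      calc ‖r (n + 1)‖ ≤ q * ‖r n‖ := by rw [hr_succ]; exact (hg _).1
        _ ≤ q * (q ^ n * ‖y‖) := by gcongr
        _ = q ^ (n + 1) * ‖y‖ := by ring
  have hr_summable : Summable fun n => ‖r n‖ :=
    .of_nonneg_of_le (fun n => norm_nonneg _) hr
      ((summable_geometric_of_lt_one hq₀ hq).mul_right _)
  have hsum : Summable fun n => g (r n) :=
    .of_norm_bounded (hr_summable.mul_left C) fun n => (hg _).2
  have hpartial : ∀ n, f (∑ i ∈ Finset.range n, g (r i)) = y - r n := by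
    intro n
    induction n with
    | zero => simp [r]
    | succ n ih => rw [Finset.sum_range_succ, map_add, ih, hr_succ]; abel
  have hr_lim : Tendsto r atTop (𝓝 0) :=
    squeeze_zero_norm hr <| by
      simpa using (tendsto_pow_atTop_nhds_zero_of_lt_one hq₀ hq).mul_const ‖y‖
  refine ⟨∑' n, g (r n), tendsto_nhds_unique
    ((f.continuous.tendsto _).comp hsum.hasSum.tendsto_sum_nat) ?_⟩
  simpa [comp_def, hpartial] using tendsto_const_nhds.sub hr_lim

theorem isOpen_setOf_surjective [CompleteSpace E] [CompleteSpace F] :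
    IsOpen {f : E →L[𝕜] F | Surjective f} := by
  refine Metric.isOpen_iff.mpr fun f hf => ?_
  obtain ⟨C, hC, hpre⟩ := f.exists_preimage_norm_le hf
  refine ⟨(2 * C)⁻¹, by positivity, fun f' hf' => ?_⟩
  rw [Metric.mem_ball, dist_eq_norm] at hf'
  refine f'.surjective_of_forall_exists_norm_sub_le (C := C) (by norm_num : (0 : ℝ) ≤ 1 / 2)
    (by norm_num) fun y => ?_
  obtain ⟨x, rfl, hx⟩ := hpre y
  refine ⟨x, ?_, hx⟩
  calc ‖f x - f' x‖ = ‖(f' - f) x‖ := by rw [sub_apply, norm_sub_rev]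
    _ ≤ ‖f' - f‖ * ‖x‖ := le_opNorm _ _
    _ ≤ (2 * C)⁻¹ * (C * ‖f x‖) := by gcongr
    _ = 1 / 2 * ‖f x‖ := by field_simp

noncomputable def lpInftyCompLeft (ι : Type*) (A : E →L[𝕜] F) : ℓ^∞(ι, E) →L[𝕜] ℓ^∞(ι, F) :=
  LinearMap.mkContinuous
    { toFun := fun x => ⟨fun i => A (x i),
        ((lp.memℓp x).norm.const_mul ‖A‖).mono fun i => A.le_opNorm (x i)⟩
      map_add' := fun x y => lp.ext <| funext fun i => map_add A (x i) (y i)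
      map_smul' := fun c x => lp.ext <| funext fun i => map_smul A c (x i) }
    ‖A‖ fun x => lp.norm_le_of_forall_le (by positivity) fun i =>
      (A.le_opNorm _).trans (by gcongr; exact lp.norm_apply_le_norm ENNReal.top_ne_zero x i)

@[simp]
theorem lpInftyCompLeft_apply (ι : Type*) (A : E →L[𝕜] F) (x : ℓ^∞(ι, E)) (i : ι) :
    A.lpInftyCompLeft ι x i = A (x i) :=
  rfl

theorem norm_lpInftyCompLeft_le (ι : Type*) (A : E →L[𝕜] F) : ‖A.lpInftyCompLeft ι‖ ≤ ‖A‖ :=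
  LinearMap.mkContinuous_norm_le _ (norm_nonneg A) _

end ContinuousLinearMap

theorem exists_int_seq_add_one_eq {X : Type*} [Nonempty X] (f : ℤ → X ≃ X) :
    ∃ x : ℤ → X, ∀ n, x (n + 1) = f n (x n) := by
  inhabit X
  -- `backward k` is the value at `-k`
  let forward : ℕ → X := fun k => Nat.rec default (fun k y => f k y) k
  let backward : ℕ → X := fun k => Nat.rec default (fun k y => (f (Int.negSucc k)).symm y) k
  refine ⟨fun n => Int.rec forward (fun k => backward (k + 1)) n, ?_⟩
  rintro (k | _ | k)
  · rfl
  · exact ((f (-1)).apply_symm_apply _).symm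
  · exact ((f (Int.negSucc (k + 1))).apply_symm_apply _).symm

namespace ContinuousLinearEquiv

variable {R M : Type*} [Semiring R] [TopologicalSpace M] [AddCommMonoid M] [Module R M]

theorem zpow_add_one_apply (T : M ≃L[R] M) (n : ℤ) (y : M) :
    (T ^ (n + 1)) y = T ((T ^ n) y) := by
  rw [add_comm, zpow_one_add]
  rfl

theorem eq_zpow_apply_of_forall_add_one {T : M ≃L[R] M} {u : ℤ → M}
    (hu : ∀ n, u (n + 1) = T (u n)) (n : ℤ) : u n = (T ^ n) (u 0) := by
  induction n using Int.induction_on with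
  | zero => rfl
  | succ k ih => rw [hu, ih, zpow_add_one_apply]
  | pred k ih =>
    apply T.injective
    rw [← zpow_add_one_apply, sub_add_cancel, ← hu, sub_add_cancel, ih]

end ContinuousLinearEquiv

section InducedOperator

variable {𝕜 B : Type*} [NontriviallyNormedField 𝕜] [NormedAddCommGroup B] [NormedSpace 𝕜 B]

def IsInducedOperator (A : B →L[𝕜] B) (L : ℓ^∞(ℤ, B) →L[𝕜] ℓ^∞(ℤ, B)) : Prop :=
  ∀ x n, L x n = x (n + 1) - A (x n)

variable {A A' : B →L[𝕜] B} {L L' : ℓ^∞(ℤ, B) →L[𝕜] ℓ^∞(ℤ, B)}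

theorem IsInducedOperator.sub_eq (hL : IsInducedOperator A L) (hL' : IsInducedOperator A' L') :
    L - L' = (A' - A).lpInftyCompLeft ℤ :=
  ContinuousLinearMap.ext fun x => lp.ext <| funext fun n => by
    simp [hL x n, hL' x n]

theorem IsInducedOperator.norm_sub_le (hL : IsInducedOperator A L)
    (hL' : IsInducedOperator A' L') : ‖L - L'‖ ≤ ‖A - A'‖ := by
  rw [hL.sub_eq hL', norm_sub_rev A]
  exact ContinuousLinearMap.norm_lpInftyCompLeft_le ℤ _

theorem IsInducedOperator.add_lpInftyCompLeft (hL : IsInducedOperator A L) (A' : B →L[𝕜] B) :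
    IsInducedOperator A' (L + (A - A').lpInftyCompLeft ℤ) := fun x n => by
  simp [hL x n]

end InducedOperator

section Shadowing

variable {B : Type*} [NormedAddCommGroup B] [NormedSpace ℝ B] {T : B ≃L[ℝ] B}
  {L : ℓ^∞(ℤ, B) →L[ℝ] ℓ^∞(ℤ, B)}

theorem Shadowing.surjective (hT : Shadowing T) (hL : IsInducedOperator (T : B →L[ℝ] B) L) :
    Surjective L := by
  obtain ⟨δ, hδ, hshadow⟩ := hT 1 one_pos
  suffices Metric.ball (0 : ℓ^∞(ℤ, B)) δ ⊆ LinearMap.range (L : ℓ^∞(ℤ, B) →ₗ[ℝ] ℓ^∞(ℤ, B)) from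
    LinearMap.range_eq_top.mp <| Submodule.eq_top_of_nonempty_interior' _
      ⟨0, mem_interior.mpr ⟨_, this, Metric.isOpen_ball, Metric.mem_ball_self hδ⟩⟩
  intro z hz
  obtain ⟨x, hx⟩ := exists_int_seq_add_one_eq fun n => T.toEquiv.trans (Equiv.addRight (z n))
  obtain ⟨y, hy⟩ := hshadow x fun n => by
    simpa [hx] using
      (lp.norm_apply_le_norm ENNReal.top_ne_zero z n).trans_lt (mem_ball_zero_iff.mp hz)
  refine ⟨⟨fun n => x n - (T ^ n) y, memℓp_infty ⟨1, ?_⟩⟩, lp.ext <| funext fun n => ?_⟩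
  · rintro _ ⟨n, rfl⟩
    exact (hy n).le
  · simp [hL _ n, hx, T.zpow_add_one_apply]

theorem shadowing_of_surjective [CompleteSpace B] (hL : IsInducedOperator (T : B →L[ℝ] B) L)
    (hsurj : Surjective L) : Shadowing T := by
  obtain ⟨C, hC, hpre⟩ := L.exists_preimage_norm_le hsurj
  intro ε hε
  refine ⟨ε / (2 * C), by positivity, fun x hx => ?_⟩
  let z : ℓ^∞(ℤ, B) := ⟨fun n => x (n + 1) - T (x n),
    memℓp_infty ⟨ε / (2 * C), by rintro _ ⟨n, rfl⟩; exact (hx n).le⟩⟩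
  obtain ⟨w, hw, hwz⟩ := hpre z
  have hw_lt : ‖w‖ < ε :=
    calc ‖w‖ ≤ C * ‖z‖ := hwz
      _ ≤ C * (ε / (2 * C)) := by
        gcongr
        exact lp.norm_le_of_forall_le (by positivity) fun n => (hx n).le
      _ < ε := by field_simp; linarith
  have horbit : ∀ n, x (n + 1) - w (n + 1) = T (x n - w n) := fun n => by
    have hwn : L w n = z n := by rw [hw]
    rw [hL w n] at hwn
    rw [map_sub, sub_eq_sub_iff_sub_eq_sub]
    exact hwn.symm
  refine ⟨x 0 - w 0, fun n => ?_⟩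
  rw [← T.eq_zpow_apply_of_forall_add_one (u := fun n => x n - w n) horbit n, sub_sub_cancel]
  exact (lp.norm_apply_le_norm ENNReal.top_ne_zero w n).trans_lt hw_lt

end Shadowing

/-- for the induced operators on `ℓ^∞(ℤ,B)` one has `‖T_∞ - S_∞‖ ≤ ‖T - S‖`;
consequently, the shadowing property is open in the operator-norm topology on automorphisms. -/
theorem stmt5 {B : Type*} [NormedAddCommGroup B] [NormedSpace ℝ B] [CompleteSpace B]
    (T S : B ≃L[ℝ] B)
    (LT LS : lp (fun _ : ℤ => B) ⊤ →L[ℝ] lp (fun _ : ℤ => B) ⊤)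
    (hLT : ∀ (x : lp (fun _ : ℤ => B) ⊤) (n : ℤ),
      (LT x : ∀ _ : ℤ, B) n = (x : ∀ _ : ℤ, B) (n + 1) - T ((x : ∀ _ : ℤ, B) n))
    (hLS : ∀ (x : lp (fun _ : ℤ => B) ⊤) (n : ℤ),
      (LS x : ∀ _ : ℤ, B) n = (x : ∀ _ : ℤ, B) (n + 1) - S ((x : ∀ _ : ℤ, B) n)) :
    ‖LT - LS‖ ≤ ‖(T : B →L[ℝ] B) - (S : B →L[ℝ] B)‖ ∧
    (Shadowing T → ∃ ε > (0 : ℝ), ∀ S' : B ≃L[ℝ] B,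
      ‖(T : B →L[ℝ] B) - (S' : B →L[ℝ] B)‖ < ε → Shadowing S') := by
  have hT : IsInducedOperator (T : B →L[ℝ] B) LT := hLT
  refine ⟨hT.norm_sub_le hLS, fun hshadow => ?_⟩
  obtain ⟨ε, hε, hball⟩ := Metric.isOpen_iff.mp ContinuousLinearMap.isOpen_setOf_surjective LT
    (hshadow.surjective hT)
  refine ⟨ε, hε, fun S' hS' => ?_⟩
  have hS'_induced := hT.add_lpInftyCompLeft (S' : B →L[ℝ] B)
  refine shadowing_of_surjective hS'_induced (hball ?_)
  rw [Metric.mem_ball, dist_eq_norm]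
  exact (hS'_induced.norm_sub_le hT).trans_lt (by rwa [norm_sub_rev])
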